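/- arXiv:0902.2535 — 3 statements merged into one kernel-verified Lean document; each statement's English description precedes it below -/
import Mathlib

section
/- The derivation actions of Π and 2Φ on Ψ coincide: Π.Ψ = 2(Φ.Ψ). -/
open scoped RealInnerProductSpace

noncomputable section

variable {V : Type*} [NormedAddCommGroup V] [InnerProductSpace ℝ V] [FiniteDimensional ℝ V]

/-- The orthogonal projection onto `D`, as a map `V → V`. -/
def projD (D : Submodule ℝ V) (X : V) : V := (D.orthogonalProjection X : V)

/-- The bilinear form `h(X,Y) = ⟪πX, πY⟫`. -/
def hForm (D : Submodule ℝ V) (X Y : V) : ℝ := ⟪projD D X, projD D Y⟫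

/-- The 2-form `ω(X,Y) = h(JX, Y)`. -/
def omForm (J : V →ₗ[ℝ] V) (D : Submodule ℝ V) (X Y : V) : ℝ := hForm D (J X) Y

/-- The standard Kähler curvature-type tensor `Π` of constant holomorphic sectional curvature. -/
def PiT (J : V →ₗ[ℝ] V) (U Vv W : V) : V :=
  (1/4 : ℝ) • (⟪Vv, W⟫ • U - ⟪U, W⟫ • Vv + ⟪J Vv, W⟫ • J U - ⟪J U, W⟫ • J Vv
    - (2 * ⟪J U, Vv⟫) • J W)

/-- The curvature-type tensor `Φ`. -/
def PhiT (J : V →ₗ[ℝ] V) (D : Submodule ℝ V) (U Vv W : V) : V :=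
  (1/8 : ℝ) • (⟪Vv, W⟫ • projD D U - ⟪U, W⟫ • projD D Vv
    + hForm D Vv W • U - hForm D U W • Vv
    + ⟪J Vv, W⟫ • projD D (J U) - ⟪J U, W⟫ • projD D (J Vv)
    + omForm J D Vv W • J U - omForm J D U W • J Vv
    - (2 * ⟪J U, Vv⟫) • projD D (J W) - (2 * omForm J D U Vv) • J W)

/-- The curvature-type tensor `Ψ(U,V)W = −ω(U,V)·J(πW)`. -/
def PsiT (J : V →ₗ[ℝ] V) (D : Submodule ℝ V) (U Vv W : V) : V :=
  -(omForm J D U Vv) • J (projD D W)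

/-- The derivation action of an endomorphism `A` on a bilinear form `T`. -/
def der2 (A : V → V) (T : V → V → ℝ) (X Y : V) : ℝ := -T (A X) Y - T X (A Y)

/-- The derivation action of an endomorphism `A` on a 4-multilinear form `T`. -/
def der4 (A : V → V) (T : V → V → V → V → ℝ) (X Y Z W : V) : ℝ :=
  -T (A X) Y Z W - T X (A Y) Z W - T X Y (A Z) W - T X Y Z (A W)

/-- The 4-form `S₀(X,Y,Z,W) = ⟪S(X,Y)Z, W⟫` associated with an endomorphism-valued 2-form. -/
def form4 (S : V → V → V → V) (X Y Z W : V) : ℝ := ⟪S X Y Z, W⟫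

/-- The 6-multilinear form `(R.S)(U,V,X,Y,Z,W) = (R(U,V).S₀)(X,Y,Z,W)`. -/
def dotRS (R S : V → V → V → V) (U Vv X Y Z W : V) : ℝ :=
  der4 (R U Vv) (form4 S) X Y Z W

/-! Since `Ψ₀ = -ω ⊗ ω`, the derivation action of any `A` on `Ψ₀` is determined by `A.ω`, so it
suffices to show `Π(U,V).ω = 2 Φ(U,V).ω`. Because `J` and `π` commute, `(A.ω)(X,Y)` is the
antisymmetrisation of `⟪AX, JπY⟫`; expanding, `8⟪Φ(U,V)X, JπY⟫` is `4⟪Π(U,V)X, JπY⟫` plus terms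
that are symmetric in `X, Y` and hence drop out. -/

section Projection

variable (D : Submodule ℝ V)

theorem projD_mem (x : V) : projD D x ∈ D :=
  Submodule.coe_mem _

theorem inner_projD_left (x y : V) : ⟪projD D x, y⟫ = ⟪x, projD D y⟫ :=
  D.inner_starProjection_left_eq_right x y

theorem inner_projD_of_mem {y : V} (x : V) (hy : y ∈ D) : ⟪projD D x, y⟫ = ⟪x, y⟫ := by
  rw [inner_projD_left, projD, ← D.starProjection_apply, D.starProjection_eq_self_iff.mpr hy]

theorem hForm_eq_inner_projD (x y : V) : hForm D x y = ⟪x, projD D y⟫ := by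
  rw [hForm, inner_projD_of_mem D x (projD_mem D y)]

theorem hForm_comm (x y : V) : hForm D x y = hForm D y x :=
  real_inner_comm _ _

end Projection

theorem inner_J_left {E : Type*} [NormedAddCommGroup E] [InnerProductSpace ℝ E]
    {J : E →ₗ[ℝ] E} (hJ2 : ∀ X : E, J (J X) = -X) (hJg : ∀ X Y : E, ⟪J X, J Y⟫ = ⟪X, Y⟫)
    (x y : E) : ⟪J x, y⟫ = -⟪x, J y⟫ := by
  have := hJg x (J y)
  rw [hJ2, inner_neg_right] at this
  linarith

section ComplexStructure

variable {J : V →ₗ[ℝ] V}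

theorem projD_J (hJ2 : ∀ X : V, J (J X) = -X) (hJg : ∀ X Y : V, ⟪J X, J Y⟫ = ⟪X, Y⟫)
    {D : Submodule ℝ V} (hJD : ∀ X ∈ D, J X ∈ D) (x : V) :
    projD D (J x) = J (projD D x) := by
  refine D.eq_starProjection_of_mem_of_inner_eq_zero (hJD _ (projD_mem D x)) fun w hw => ?_
  rw [← map_sub, inner_J_left hJ2 hJg]
  exact neg_eq_zero.mpr
    (Submodule.inner_left_of_mem_orthogonal (hJD w hw) (D.sub_starProjection_mem_orthogonal x))

theorem inner_J_projD_right (hJ2 : ∀ X : V, J (J X) = -X)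
    (hJg : ∀ X Y : V, ⟪J X, J Y⟫ = ⟪X, Y⟫) (D : Submodule ℝ V) (x y : V) :
    ⟪x, J (projD D y)⟫ = -omForm J D x y := by
  rw [omForm, hForm_eq_inner_projD, inner_J_left hJ2 hJg, neg_neg]

theorem inner_J_J_projD_right (hJg : ∀ X Y : V, ⟪J X, J Y⟫ = ⟪X, Y⟫) (D : Submodule ℝ V)
    (x y : V) : ⟪J x, J (projD D y)⟫ = hForm D x y := by
  rw [hJg, hForm_eq_inner_projD]

theorem omForm_swap (hJ2 : ∀ X : V, J (J X) = -X) (hJg : ∀ X Y : V, ⟪J X, J Y⟫ = ⟪X, Y⟫)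
    {D : Submodule ℝ V} (hJD : ∀ X ∈ D, J X ∈ D) (x y : V) :
    omForm J D y x = -omForm J D x y := by
  rw [omForm, omForm, hForm_eq_inner_projD, hForm_comm, hForm_eq_inner_projD,
    projD_J hJ2 hJg hJD, inner_J_left hJ2 hJg]

theorem der2_omForm (hJ2 : ∀ X : V, J (J X) = -X) (hJg : ∀ X Y : V, ⟪J X, J Y⟫ = ⟪X, Y⟫)
    {D : Submodule ℝ V} (hJD : ∀ X ∈ D, J X ∈ D) (A : V → V) (x y : V) :
    der2 A (omForm J D) x y = ⟪A x, J (projD D y)⟫ - ⟪A y, J (projD D x)⟫ := by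
  rw [der2, omForm_swap hJ2 hJg hJD (A y) x, inner_J_projD_right hJ2 hJg,
    inner_J_projD_right hJ2 hJg]

theorem form4_PsiT (hJ2 : ∀ X : V, J (J X) = -X) (hJg : ∀ X Y : V, ⟪J X, J Y⟫ = ⟪X, Y⟫)
    {D : Submodule ℝ V} (hJD : ∀ X ∈ D, J X ∈ D) (x y z w : V) :
    form4 (PsiT J D) x y z w = -(omForm J D x y * omForm J D z w) := by
  rw [form4, PsiT, real_inner_smul_left, real_inner_comm, inner_J_projD_right hJ2 hJg,
    omForm_swap hJ2 hJg hJD z w]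
  ring

theorem inner_PiT_J_projD (hJ2 : ∀ X : V, J (J X) = -X)
    (hJg : ∀ X Y : V, ⟪J X, J Y⟫ = ⟪X, Y⟫) (D : Submodule ℝ V) (u v x y : V) :
    ⟪PiT J u v x, J (projD D y)⟫ = (1/4 : ℝ) * (-⟪v, x⟫ * omForm J D u y
      + ⟪u, x⟫ * omForm J D v y + ⟪J v, x⟫ * hForm D u y - ⟪J u, x⟫ * hForm D v y
      - 2 * ⟪J u, v⟫ * hForm D x y) := by
  simp only [PiT, real_inner_smul_left, inner_add_left, inner_sub_left]
  -- before `inner_J_projD_right`, which would also match `⟪J u, J (projD D y)⟫`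
  simp only [inner_J_J_projD_right hJg]
  simp only [inner_J_projD_right hJ2 hJg]
  ring

theorem inner_PhiT_J_projD (hJ2 : ∀ X : V, J (J X) = -X)
    (hJg : ∀ X Y : V, ⟪J X, J Y⟫ = ⟪X, Y⟫) {D : Submodule ℝ V} (hJD : ∀ X ∈ D, J X ∈ D)
    (u v x y : V) :
    ⟪PhiT J D u v x, J (projD D y)⟫ = (1/8 : ℝ) * (-⟪v, x⟫ * omForm J D u y
      + ⟪u, x⟫ * omForm J D v y - hForm D v x * omForm J D u y + hForm D u x * omForm J D v y
      + ⟪J v, x⟫ * hForm D u y - ⟪J u, x⟫ * hForm D v y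
      + omForm J D v x * hForm D u y - omForm J D u x * hForm D v y
      - 2 * ⟪J u, v⟫ * hForm D x y - 2 * omForm J D u v * hForm D x y) := by
  have hmem : J (projD D y) ∈ D := hJD _ (projD_mem D y)
  simp only [PhiT, real_inner_smul_left, inner_add_left, inner_sub_left,
    inner_projD_of_mem D _ hmem]
  simp only [inner_J_J_projD_right hJg]
  simp only [inner_J_projD_right hJ2 hJg]
  ring

theorem der2_PiT_omForm_eq_two_mul (hJ2 : ∀ X : V, J (J X) = -X)
    (hJg : ∀ X Y : V, ⟪J X, J Y⟫ = ⟪X, Y⟫) {D : Submodule ℝ V} (hJD : ∀ X ∈ D, J X ∈ D)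
    (u v x y : V) :
    der2 (PiT J u v) (omForm J D) x y = 2 * der2 (PhiT J D u v) (omForm J D) x y := by
  simp only [der2_omForm hJ2 hJg hJD, inner_PiT_J_projD hJ2 hJg, inner_PhiT_J_projD hJ2 hJg hJD,
    hForm_comm D y x]
  ring

theorem dotRS_PsiT (hJ2 : ∀ X : V, J (J X) = -X) (hJg : ∀ X Y : V, ⟪J X, J Y⟫ = ⟪X, Y⟫)
    {D : Submodule ℝ V} (hJD : ∀ X ∈ D, J X ∈ D) (R : V → V → V → V) (u v x y z w : V) :
    dotRS R (PsiT J D) u v x y z w = -(der2 (R u v) (omForm J D) x y * omForm J D z w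
      + omForm J D x y * der2 (R u v) (omForm J D) z w) := by
  simp only [dotRS, der4, der2, form4_PsiT hJ2 hJg hJD]
  ring

end ComplexStructure

theorem stmt_3_general {V : Type*} [NormedAddCommGroup V] [InnerProductSpace ℝ V]
    [FiniteDimensional ℝ V]
    (J : V →ₗ[ℝ] V) (hJ2 : ∀ X : V, J (J X) = -X)
    (hJg : ∀ X Y : V, ⟪J X, J Y⟫ = ⟪X, Y⟫)
    (D : Submodule ℝ V)
    (hJD : ∀ X ∈ D, J X ∈ D) :
    ∀ U Vv X Y Z W : V,
      dotRS (PiT J) (PsiT J D) U Vv X Y Z W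
        = 2 * dotRS (PhiT J D) (PsiT J D) U Vv X Y Z W := by
  intro U Vv X Y Z W
  rw [dotRS_PsiT hJ2 hJg hJD, dotRS_PsiT hJ2 hJg hJD, der2_PiT_omForm_eq_two_mul hJ2 hJg hJD,
    der2_PiT_omForm_eq_two_mul hJ2 hJg hJD]
  ring

theorem stmt_3 {V : Type*} [NormedAddCommGroup V] [InnerProductSpace ℝ V]
    [FiniteDimensional ℝ V]
    (J : V →ₗ[ℝ] V) (hJ2 : ∀ X : V, J (J X) = -X)
    (hJg : ∀ X Y : V, ⟪J X, J Y⟫ = ⟪X, Y⟫)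
    (D : Submodule ℝ V) (hD2 : Module.finrank ℝ ↥D = 2)
    (hJD : ∀ X ∈ D, J X ∈ D) :
    ∀ U Vv X Y Z W : V,
      dotRS (PiT J) (PsiT J D) U Vv X Y Z W
        = 2 * dotRS (PhiT J D) (PsiT J D) U Vv X Y Z W :=
  stmt_3_general J hJ2 hJg D hJD
end
end

section
/- The derivation action of Φ annihilates Π: Φ.Π = 0. -/
open scoped RealInnerProductSpace

noncomputable section

variable {V : Type*} [NormedAddCommGroup V] [InnerProductSpace ℝ V] [FiniteDimensional ℝ V]

/-!
`Π₀` is built from the metric and the Kähler form `⟪J ·, ·⟫` alone, and both are annihilated by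
every skew-adjoint endomorphism commuting with `J`; hence so is `Π₀`. Since `D` is `J`-invariant
and `J` is skew-adjoint, `π` is a self-adjoint idempotent commuting with `J`, and from this each
`Φ(U,V)` is skew-adjoint and commutes with `J`.
-/

section InnerProductSpace

variable {E : Type*} [NormedAddCommGroup E] [InnerProductSpace ℝ E]

lemma inner_map_left_eq_neg_inner_map_right {J : E →ₗ[ℝ] E}
    (hJ2 : ∀ X : E, J (J X) = -X) (hJg : ∀ X Y : E, ⟪J X, J Y⟫ = ⟪X, Y⟫) (X Y : E) :
    ⟪J X, Y⟫ = -⟪X, J Y⟫ := by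
  rw [← hJg, hJ2, inner_neg_left]

theorem der4_form4_PiT_eq_zero {J : E →ₗ[ℝ] E} {A : E → E}
    (hA : ∀ X Y : E, ⟪A X, Y⟫ = -⟪X, A Y⟫) (hAJ : ∀ X : E, J (A X) = A (J X))
    (X Y Z W : E) : der4 A (form4 (PiT J)) X Y Z W = 0 := by
  simp only [der4, form4, PiT, inner_add_left, inner_sub_left, real_inner_smul_left, hAJ, hA]
  ring

lemma starProjection_map_eq_map_starProjection {K : Submodule ℝ E} [K.HasOrthogonalProjection]
    {J : E →ₗ[ℝ] E}
    (hJ : ∀ X Y : E, ⟪J X, Y⟫ = -⟪X, J Y⟫) (hJK : ∀ X ∈ K, J X ∈ K) (X : E) :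
    K.starProjection (J X) = J (K.starProjection X) := by
  have hmem : J (K.starProjection X) ∈ K := hJK _ (K.starProjection_apply_mem X)
  have horth : J (X - K.starProjection X) ∈ Kᗮ := by
    intro Y hY
    rw [← neg_neg ⟪Y, _⟫, ← hJ, Submodule.inner_right_of_mem_orthogonal (hJK Y hY)
      (K.sub_starProjection_mem_orthogonal X), neg_zero]
  calc K.starProjection (J X)
      = K.starProjection (J (K.starProjection X))
          + K.starProjection (J (X - K.starProjection X)) := by
        rw [← map_add, ← map_add, add_sub_cancel]
    _ = J (K.starProjection X) := by
        rw [K.starProjection_eq_self_iff.mpr hmem, K.starProjection_apply_eq_zero_iff.mpr horth,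
          add_zero]

end InnerProductSpace

section PhiT

variable (D : Submodule ℝ V)

lemma projD_eq_starProjection : projD D = D.starProjection := rfl

lemma hForm_eq_inner_starProjection (X Y : V) : hForm D X Y = ⟪X, D.starProjection Y⟫ := by
  rw [hForm, projD_eq_starProjection, D.inner_starProjection_left_eq_right,
    D.starProjection_eq_self_iff.mpr (D.starProjection_apply_mem Y)]

lemma omForm_eq_inner_starProjection (J : V →ₗ[ℝ] V) (X Y : V) :
    omForm J D X Y = ⟪J X, D.starProjection Y⟫ :=
  hForm_eq_inner_starProjection D (J X) Y

variable {D} {J : V →ₗ[ℝ] V}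

lemma inner_map_starProjection_left (hJ : ∀ X Y : V, ⟪J X, Y⟫ = -⟪X, J Y⟫)
    (hJD : ∀ X ∈ D, J X ∈ D) (X Y : V) :
    ⟪J (D.starProjection X), Y⟫ = ⟪J X, D.starProjection Y⟫ := by
  rw [← starProjection_map_eq_map_starProjection hJ hJD, D.inner_starProjection_left_eq_right]

lemma inner_PhiT (hJ : ∀ X Y : V, ⟪J X, Y⟫ = -⟪X, J Y⟫) (hJD : ∀ X ∈ D, J X ∈ D) (U Vv X Y : V) :
    ⟪PhiT J D U Vv X, Y⟫ =
      (1/8 : ℝ) * (⟪Vv, X⟫ * ⟪U, D.starProjection Y⟫ - ⟪U, X⟫ * ⟪Vv, D.starProjection Y⟫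
        + ⟪Vv, D.starProjection X⟫ * ⟪U, Y⟫ - ⟪U, D.starProjection X⟫ * ⟪Vv, Y⟫
        + ⟪J Vv, X⟫ * ⟪J U, D.starProjection Y⟫ - ⟪J U, X⟫ * ⟪J Vv, D.starProjection Y⟫
        + ⟪J Vv, D.starProjection X⟫ * ⟪J U, Y⟫ - ⟪J U, D.starProjection X⟫ * ⟪J Vv, Y⟫
        - 2 * ⟪J U, Vv⟫ * ⟪J X, D.starProjection Y⟫
        - 2 * ⟪J U, D.starProjection Vv⟫ * ⟪J X, Y⟫) := by
  simp only [PhiT, hForm_eq_inner_starProjection, omForm_eq_inner_starProjection,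
    projD_eq_starProjection, inner_add_left, inner_sub_left, real_inner_smul_left,
    D.inner_starProjection_left_eq_right, starProjection_map_eq_map_starProjection hJ hJD,
    inner_map_starProjection_left hJ hJD]

lemma inner_PhiT_left (hJ : ∀ X Y : V, ⟪J X, Y⟫ = -⟪X, J Y⟫) (hJD : ∀ X ∈ D, J X ∈ D)
    (U Vv X Y : V) : ⟪PhiT J D U Vv X, Y⟫ = -⟪X, PhiT J D U Vv Y⟫ := by
  have hJYX : ⟪J Y, X⟫ = -⟪J X, Y⟫ := by rw [hJ, real_inner_comm]
  have hJYπX : ⟪J Y, D.starProjection X⟫ = -⟪J X, D.starProjection Y⟫ := by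
    rw [← inner_map_starProjection_left hJ hJD, hJ, real_inner_comm]
  conv_rhs => rw [real_inner_comm]
  rw [inner_PhiT hJ hJD, inner_PhiT hJ hJD, hJYX, hJYπX]
  ring

lemma map_PhiT (hJ2 : ∀ X : V, J (J X) = -X) (hJg : ∀ X Y : V, ⟪J X, J Y⟫ = ⟪X, Y⟫)
    (hJD : ∀ X ∈ D, J X ∈ D) (U Vv X : V) : J (PhiT J D U Vv X) = PhiT J D U Vv (J X) := by
  have hJ := inner_map_left_eq_neg_inner_map_right hJ2 hJg
  have hJ' (X Y : V) : ⟪X, J Y⟫ = -⟪J X, Y⟫ := by rw [hJ, neg_neg]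
  simp only [PhiT, hForm_eq_inner_starProjection, omForm_eq_inner_starProjection,
    projD_eq_starProjection, map_smul, map_add, map_sub, map_neg,
    starProjection_map_eq_map_starProjection hJ hJD, hJ2, hJg, hJ']
  module

end PhiT

theorem stmt_5_general {V : Type*} [NormedAddCommGroup V] [InnerProductSpace ℝ V]
    [FiniteDimensional ℝ V]
    (J : V →ₗ[ℝ] V) (hJ2 : ∀ X : V, J (J X) = -X)
    (hJg : ∀ X Y : V, ⟪J X, J Y⟫ = ⟪X, Y⟫)
    (D : Submodule ℝ V)
    (hJD : ∀ X ∈ D, J X ∈ D) :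
    ∀ U Vv X Y Z W : V,
      dotRS (PhiT J D) (PiT J) U Vv X Y Z W = 0 := by
  intro U Vv X Y Z W
  have hJ := inner_map_left_eq_neg_inner_map_right hJ2 hJg
  exact der4_form4_PiT_eq_zero (inner_PhiT_left hJ hJD U Vv) (map_PhiT hJ2 hJg hJD U Vv) X Y Z W

theorem stmt_5 {V : Type*} [NormedAddCommGroup V] [InnerProductSpace ℝ V]
    [FiniteDimensional ℝ V]
    (J : V →ₗ[ℝ] V) (hJ2 : ∀ X : V, J (J X) = -X)
    (hJg : ∀ X Y : V, ⟪J X, J Y⟫ = ⟪X, Y⟫)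
    (D : Submodule ℝ V) (hD2 : Module.finrank ℝ ↥D = 2)
    (hJD : ∀ X ∈ D, J X ∈ D) :
    ∀ U Vv X Y Z W : V,
      dotRS (PhiT J D) (PiT J) U Vv X Y Z W = 0 :=
  stmt_5_general J hJ2 hJg D hJD
end
end

section
/- For all U, V ∈ V, the endomorphism Φ(U,V) is skew-symmetric with respect to the inner product (equivalently Φ(U,V).g = 0) and commutes with J; consequently Φ(U,V) annihilates the Kähler form Ω(X,Y) = ⟪JX,Y⟫ under the derivation action. -/
open scoped RealInnerProductSpace

noncomputable section

variable {V : Type*} [NormedAddCommGroup V] [InnerProductSpace ℝ V] [FiniteDimensional ℝ V]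

/-!
After rewriting `h` and `ω` through `π`, which commutes with `J`, and writing
`a ∧ b = ⟪a, ·⟫ b - ⟪b, ·⟫ a`,
`8 Φ(U,V) = (V ∧ πU + JV ∧ JπU) - (U ∧ πV + JU ∧ JπV) - 2⟪JU,V⟫ πJ - 2ω(U,V) J`.
Every term is skew-adjoint and commutes with `J`, and a skew-adjoint endomorphism commuting
with `J` annihilates `Ω`.
-/

section SkewMaps

variable {E : Type*} [NormedAddCommGroup E] [InnerProductSpace ℝ E]

def IsSkew (A : E → E) : Prop := ∀ X Y : E, ⟪A X, Y⟫ = -⟪X, A Y⟫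

lemma IsSkew.add {A B : E → E} (hA : IsSkew A) (hB : IsSkew B) : IsSkew (A + B) := by
  intro X Y
  simp only [Pi.add_apply, inner_add_left, inner_add_right, hA X Y, hB X Y]
  ring

lemma IsSkew.sub {A B : E → E} (hA : IsSkew A) (hB : IsSkew B) : IsSkew (A - B) := by
  intro X Y
  simp only [Pi.sub_apply, inner_sub_left, inner_sub_right, hA X Y, hB X Y]
  ring

lemma IsSkew.smul {A : E → E} (hA : IsSkew A) (c : ℝ) : IsSkew (c • A) := by
  intro X Y
  simp only [Pi.smul_apply, real_inner_smul_left, real_inner_smul_right, hA X Y]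
  ring

lemma isSkew_of_isometry_of_sq_eq_neg {J : E →ₗ[ℝ] E} (hJ2 : ∀ X : E, J (J X) = -X)
    (hJg : ∀ X Y : E, ⟪J X, J Y⟫ = ⟪X, Y⟫) : IsSkew J := by
  intro X Y
  rw [← hJg X (J Y), hJ2, inner_neg_right, neg_neg]

lemma Function.Commute.add_of_linearMap {J : E →ₗ[ℝ] E} {A B : E → E}
    (hA : Function.Commute A J) (hB : Function.Commute B J) : Function.Commute (A + B) J :=
  fun W => by simp only [Pi.add_apply, hA W, hB W, map_add]

lemma Function.Commute.sub_of_linearMap {J : E →ₗ[ℝ] E} {A B : E → E}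
    (hA : Function.Commute A J) (hB : Function.Commute B J) : Function.Commute (A - B) J :=
  fun W => by simp only [Pi.sub_apply, hA W, hB W, map_sub]

lemma Function.Commute.smul_of_linearMap {J : E →ₗ[ℝ] E} {A : E → E}
    (hA : Function.Commute A J) (c : ℝ) : Function.Commute (c • A) J :=
  fun W => by simp only [Pi.smul_apply, hA W, map_smul]

def wedge (a b : E) (W : E) : E := ⟪a, W⟫ • b - ⟪b, W⟫ • a

lemma isSkew_wedge (a b : E) : IsSkew (wedge a b) := by
  intro X Y
  simp only [wedge, inner_sub_left, inner_sub_right, real_inner_smul_left,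
    real_inner_smul_right, real_inner_comm X]
  ring

/-- `a ∧ b + J⁻¹ ∘ (a ∧ b) ∘ J`, i.e. twice the `J`-invariant part of `a ∧ b`. -/
def holoWedge (J : E →ₗ[ℝ] E) (a b : E) : E → E := wedge a b + wedge (J a) (J b)

lemma isSkew_holoWedge (J : E →ₗ[ℝ] E) (a b : E) : IsSkew (holoWedge J a b) :=
  (isSkew_wedge a b).add (isSkew_wedge _ _)

lemma commute_holoWedge {J : E →ₗ[ℝ] E} (hJ2 : ∀ X : E, J (J X) = -X)
    (hJg : ∀ X Y : E, ⟪J X, J Y⟫ = ⟪X, Y⟫) (a b : E) : Function.Commute (holoWedge J a b) J := by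
  intro W
  have hJ := isSkew_of_isometry_of_sq_eq_neg hJ2 hJg
  simp only [holoWedge, wedge, Pi.add_apply, map_add, map_sub, map_smul, hJ2, hJg, hJ _ W]
  module

lemma der2_kahler_eq_zero {J : E →ₗ[ℝ] E} {A : E → E} (hA : IsSkew A)
    (hAJ : Function.Commute A J) (X Y : E) : der2 A (fun P Q => ⟪J P, Q⟫) X Y = 0 := by
  rw [der2, ← hAJ X, hA]
  ring

end SkewMaps

section Projection

variable {E : Type*} [NormedAddCommGroup E] [InnerProductSpace ℝ E] [FiniteDimensional ℝ E]
  (D : Submodule ℝ E)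

lemma projD_mem_s9 (X : E) : projD D X ∈ D := D.starProjection_apply_mem X

lemma inner_projD_left_s9 (X Y : E) : ⟪projD D X, Y⟫ = ⟪X, projD D Y⟫ :=
  D.inner_starProjection_left_eq_right X Y

lemma projD_projD (X : E) : projD D (projD D X) = projD D X :=
  Submodule.starProjection_eq_self_iff.2 (projD_mem_s9 D X)

lemma hForm_eq_inner_projD_left (X Y : E) : hForm D X Y = ⟪projD D X, Y⟫ := by
  rw [hForm, ← inner_projD_left_s9, projD_projD]

/-- A skew map preserving `D` also preserves `Dᗮ`, so it commutes with the projection. -/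
lemma projD_map_of_isSkew {J : E →ₗ[ℝ] E} (hJ : IsSkew J) (hJD : ∀ X ∈ D, J X ∈ D) (X : E) :
    projD D (J X) = J (projD D X) := by
  refine Submodule.eq_starProjection_of_mem_of_inner_eq_zero (hJD _ (projD_mem_s9 D X)) ?_
  intro w hw
  rw [← map_sub, hJ, neg_eq_zero, real_inner_comm]
  exact Submodule.sub_starProjection_mem_orthogonal X _ (hJD w hw)

lemma isSkew_projD_comp {J : E →ₗ[ℝ] E} (hJ : IsSkew J) (hJD : ∀ X ∈ D, J X ∈ D) :
    IsSkew (fun W => projD D (J W)) := by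
  intro X Y
  dsimp only
  rw [inner_projD_left_s9, hJ, projD_map_of_isSkew D hJ hJD Y]

lemma commute_projD_comp {J : E →ₗ[ℝ] E} (hJ : IsSkew J) (hJD : ∀ X ∈ D, J X ∈ D) :
    Function.Commute (fun W => projD D (J W)) J :=
  fun W => projD_map_of_isSkew D hJ hJD (J W)

lemma phiT_eq {J : E →ₗ[ℝ] E} (hJ : IsSkew J) (hJD : ∀ X ∈ D, J X ∈ D) (U Vv : E) :
    PhiT J D U Vv = (1/8 : ℝ) • (holoWedge J Vv (projD D U) - holoWedge J U (projD D Vv)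
      - (2 * ⟪J U, Vv⟫) • (fun W => projD D (J W)) - (2 * omForm J D U Vv) • ⇑J) := by
  funext W
  simp only [PhiT, omForm, hForm_eq_inner_projD_left, projD_map_of_isSkew D hJ hJD, holoWedge,
    wedge, Pi.smul_apply, Pi.sub_apply, Pi.add_apply]
  module

end Projection

theorem stmt_9_general {V : Type*} [NormedAddCommGroup V] [InnerProductSpace ℝ V]
    [FiniteDimensional ℝ V]
    (J : V →ₗ[ℝ] V) (hJ2 : ∀ X : V, J (J X) = -X)
    (hJg : ∀ X Y : V, ⟪J X, J Y⟫ = ⟪X, Y⟫)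
    (D : Submodule ℝ V)
    (hJD : ∀ X ∈ D, J X ∈ D) :
    ∀ U Vv : V,
      (∀ X Y : V, ⟪PhiT J D U Vv X, Y⟫ = -⟪X, PhiT J D U Vv Y⟫) ∧
      (∀ W : V, PhiT J D U Vv (J W) = J (PhiT J D U Vv W)) ∧
      (∀ X Y : V, der2 (PhiT J D U Vv) (fun A B => ⟪J A, B⟫) X Y = 0) := by
  intro U Vv
  have hJ : IsSkew J := isSkew_of_isometry_of_sq_eq_neg hJ2 hJg
  have hskew : IsSkew (PhiT J D U Vv) := by
    rw [phiT_eq D hJ hJD]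
    exact ((((isSkew_holoWedge J _ _).sub (isSkew_holoWedge J _ _)).sub
      ((isSkew_projD_comp D hJ hJD).smul _)).sub (hJ.smul _)).smul _
  have hcomm : Function.Commute (PhiT J D U Vv) J := by
    rw [phiT_eq D hJ hJD]
    have hwedges := (commute_holoWedge hJ2 hJg Vv (projD D U)).sub_of_linearMap
      (commute_holoWedge hJ2 hJg U (projD D Vv))
    exact ((hwedges.sub_of_linearMap ((commute_projD_comp D hJ hJD).smul_of_linearMap _))
      |>.sub_of_linearMap ((Function.Commute.refl _).smul_of_linearMap _)).smul_of_linearMap _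
  exact ⟨hskew, hcomm, der2_kahler_eq_zero hskew hcomm⟩

theorem stmt_9 {V : Type*} [NormedAddCommGroup V] [InnerProductSpace ℝ V]
    [FiniteDimensional ℝ V]
    (J : V →ₗ[ℝ] V) (hJ2 : ∀ X : V, J (J X) = -X)
    (hJg : ∀ X Y : V, ⟪J X, J Y⟫ = ⟪X, Y⟫)
    (D : Submodule ℝ V) (hD2 : Module.finrank ℝ ↥D = 2)
    (hJD : ∀ X ∈ D, J X ∈ D) :
    ∀ U Vv : V,
      (∀ X Y : V, ⟪PhiT J D U Vv X, Y⟫ = -⟪X, PhiT J D U Vv Y⟫) ∧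
      (∀ W : V, PhiT J D U Vv (J W) = J (PhiT J D U Vv W)) ∧
      (∀ X Y : V, der2 (PhiT J D U Vv) (fun A B => ⟪J A, B⟫) X Y = 0) :=
  stmt_9_general J hJ2 hJg D hJD
end
end
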